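/- arXiv:1002.4591 — 4 statements merged into one kernel-verified Lean document; each statement's English description precedes it below -/
import Mathlib

section
/- For the Skorokhod reflection map on the half-line: given a continuous function X with X(0)=0 and w₀ ≥ 0, define U(t) = max(0, -inf_{0≤s≤t}(w₀ + X(s))) and W(t) = w₀ + X(t) + U(t). Then W(t) ≥ 0 for all t, U is continuous, nondecreasing, U(0)=0, and U increases only at times t where W(t)=0. -/
/-!
Write `U = max 0 (-m)` with `m` the running infimum of the free path `f = w₀ + X`. By compactness
`m` is attained and nonincreasing; it is continuous because `m t` is the infimum over the fixed
compact set `[0, 1]` of the jointly continuous `(t, r) ↦ f (r * t)`. When `U` increases, `m` drops,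
which can only happen through a time `u` where `f u = m u < 0`, and there `W u = f u - m u = 0`.
-/

open Set

/-- The Skorokhod regulator: `U t = max(0, - inf_{0 ≤ s ≤ t} (w₀ + X s))`. -/
noncomputable def skorokhodU (X : ℝ → ℝ) (w₀ : ℝ) (t : ℝ) : ℝ :=
  max 0 (-(sInf ((fun s => w₀ + X s) '' Icc 0 t)))

/-- The reflected path `W t = w₀ + X t + U t`. -/
noncomputable def skorokhodW (X : ℝ → ℝ) (w₀ : ℝ) (t : ℝ) : ℝ :=
  w₀ + X t + skorokhodU X w₀ t

noncomputable def runningInf (f : ℝ → ℝ) (t : ℝ) : ℝ :=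
  sInf (f '' Icc 0 t)

section RunningInf

variable {f : ℝ → ℝ} {s t : ℝ}

theorem runningInf_le (hf : Continuous f) {x : ℝ} (hx : x ∈ Icc 0 t) : runningInf f t ≤ f x :=
  csInf_le (isCompact_Icc.image hf).bddBelow (mem_image_of_mem f hx)

theorem runningInf_mem_image (hf : Continuous f) (ht : 0 ≤ t) :
    runningInf f t ∈ f '' Icc 0 t :=
  (isCompact_Icc.image hf).sInf_mem ((nonempty_Icc.2 ht).image f)

theorem runningInf_zero (f : ℝ → ℝ) : runningInf f 0 = f 0 := by
  rw [runningInf, Icc_self, image_singleton, csInf_singleton]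

theorem antitoneOn_runningInf (hf : Continuous f) : AntitoneOn (runningInf f) (Ici 0) :=
  fun _ hs _ _ hst => csInf_le_csInf (isCompact_Icc.image hf).bddBelow
    ((nonempty_Icc.2 (mem_Ici.1 hs)).image f) (image_mono (Icc_subset_Icc_right hst))

theorem runningInf_eq_sInf_image_Icc_zero_one (ht : 0 ≤ t) :
    runningInf f t = sInf ((fun r => f (r * t)) '' Icc 0 1) := by
  rw [runningInf, ← image_image f (· * t), image_mul_right_Icc zero_le_one ht, zero_mul, one_mul]

theorem continuousOn_runningInf (hf : Continuous f) : ContinuousOn (runningInf f) (Ici 0) := by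
  have hcont : Continuous fun t => sInf ((fun r => f (r * t)) '' Icc 0 1) :=
    isCompact_Icc.continuous_sInf (f := fun t r => f (r * t)) (by fun_prop)
  exact hcont.continuousOn.congr fun t ht => runningInf_eq_sInf_image_Icc_zero_one ht

theorem exists_eq_runningInf_of_runningInf_lt (hf : Continuous f) (hs : 0 ≤ s) (hst : s ≤ t)
    (hlt : runningInf f t < runningInf f s) :
    ∃ u ∈ Icc s t, runningInf f u = f u ∧ runningInf f t = f u := by
  obtain ⟨u, hu, hfu⟩ := runningInf_mem_image hf (hs.trans hst)
  have hsu : s < u := by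
    by_contra! hus
    exact (runningInf_le hf ⟨hu.1, hus⟩).not_gt (hfu ▸ hlt)
  have hmu : runningInf f u = f u :=
    (runningInf_le hf ⟨hu.1, le_rfl⟩).antisymm
      (hfu ▸ antitoneOn_runningInf hf (mem_Ici.2 hu.1) (mem_Ici.2 (hs.trans hst)) hu.2)
  exact ⟨u, ⟨hsu.le, hu.2⟩, hmu, hfu.symm⟩

end RunningInf

section Skorokhod

variable {X : ℝ → ℝ} {w₀ : ℝ}

theorem skorokhodU_eq (X : ℝ → ℝ) (w₀ t : ℝ) :
    skorokhodU X w₀ t = max 0 (-runningInf (fun s => w₀ + X s) t) :=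
  rfl

theorem skorokhodW_nonneg (hX : Continuous X) {t : ℝ} (ht : 0 ≤ t) : 0 ≤ skorokhodW X w₀ t := by
  have hle : runningInf (fun s => w₀ + X s) t ≤ w₀ + X t :=
    runningInf_le (by fun_prop) ⟨ht, le_rfl⟩
  rw [skorokhodW, skorokhodU_eq]
  linarith [le_max_right 0 (-runningInf (fun s => w₀ + X s) t)]

theorem continuousOn_skorokhodU (hX : Continuous X) : ContinuousOn (skorokhodU X w₀) (Ici 0) :=
  continuousOn_const.sup (continuousOn_runningInf (by fun_prop)).neg

theorem monotoneOn_skorokhodU (hX : Continuous X) : MonotoneOn (skorokhodU X w₀) (Ici 0) :=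
  fun _ hs _ ht hst => max_le_max le_rfl (neg_le_neg (antitoneOn_runningInf (by fun_prop) hs ht hst))

theorem skorokhodU_zero (hX0 : X 0 = 0) (hw₀ : 0 ≤ w₀) : skorokhodU X w₀ 0 = 0 := by
  rw [skorokhodU_eq, runningInf_zero, hX0, add_zero, max_eq_left (neg_nonpos.2 hw₀)]

theorem exists_skorokhodW_eq_zero_of_skorokhodU_lt (hX : Continuous X) {s t : ℝ} (hs : 0 ≤ s)
    (hst : s ≤ t) (hlt : skorokhodU X w₀ s < skorokhodU X w₀ t) :
    ∃ u ∈ Icc s t, skorokhodW X w₀ u = 0 := by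
  rw [skorokhodU_eq, skorokhodU_eq] at hlt
  set m := runningInf fun s => w₀ + X s
  have hpos : 0 < -m t := by
    by_contra! h
    rw [max_eq_left h] at hlt
    exact hlt.not_ge (le_max_left _ _)
  have hdrop : m t < m s := by
    rw [max_eq_right hpos.le] at hlt
    linarith [le_max_right 0 (-m s)]
  obtain ⟨u, hu, hmu, hmt⟩ := exists_eq_runningInf_of_runningInf_lt (by fun_prop) hs hst hdrop
  refine ⟨u, hu, ?_⟩
  rw [skorokhodW, skorokhodU_eq, hmu, max_eq_right (by linarith)]
  ring

end Skorokhod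

/-- Skorokhod reflection on the half-line: `W ≥ 0`, `U` is continuous,
nondecreasing, starts at `0`, and increases only at times where `W = 0`. -/
theorem skorokhod_reflection (X : ℝ → ℝ) (hX : Continuous X) (hX0 : X 0 = 0)
    (w₀ : ℝ) (hw₀ : 0 ≤ w₀) :
    (∀ t, 0 ≤ t → 0 ≤ skorokhodW X w₀ t) ∧
    ContinuousOn (skorokhodU X w₀) (Ici 0) ∧
    MonotoneOn (skorokhodU X w₀) (Ici 0) ∧
    skorokhodU X w₀ 0 = 0 ∧
    (∀ s t, 0 ≤ s → s < t → skorokhodU X w₀ s < skorokhodU X w₀ t →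
      ∃ u ∈ Icc s t, skorokhodW X w₀ u = 0) :=
  ⟨fun _ ht => skorokhodW_nonneg hX ht, continuousOn_skorokhodU hX, monotoneOn_skorokhodU hX,
    skorokhodU_zero hX0 hw₀,
    fun _ _ hs hst hlt => exists_skorokhodW_eq_zero_of_skorokhodU_lt hX hs hst.le hlt⟩
end

section
/- Minimality of the Skorokhod regulator: if X is continuous with X(0)=0, w₀ ≥ 0, and V is any continuous nondecreasing function with V(0)=0 such that w₀ + X(t) + V(t) ≥ 0 for all t ≥ 0, then V(t) ≥ U(t) for all t, where U(t) = max(0, -inf_{0≤s≤t}(w₀ + X(s))). -/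
open Set

/-- Minimality of the Skorokhod regulator: any continuous nondecreasing `V` with
`V 0 = 0` keeping `w₀ + X + V` nonnegative dominates `U`. -/
theorem skorokhod_minimality (X : ℝ → ℝ) (hX : Continuous X) (hX0 : X 0 = 0)
    (w₀ : ℝ) (hw₀ : 0 ≤ w₀) (V : ℝ → ℝ)
    (hVcont : ContinuousOn V (Ici 0)) (hVmono : MonotoneOn V (Ici 0))
    (hV0 : V 0 = 0) (hVpos : ∀ t, 0 ≤ t → 0 ≤ w₀ + X t + V t) :
    ∀ t, 0 ≤ t → skorokhodU X w₀ t ≤ V t := by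
  intro t ht
  have hVt : 0 ≤ V t := by
    have := hVmono (self_mem_Ici) ht ht
    linarith [hV0 ▸ this]
  have hinf : -V t ≤ sInf ((fun s => w₀ + X s) '' Icc 0 t) := by
    refine le_csInf ⟨w₀ + X 0, Set.mem_image_of_mem (fun s => w₀ + X s) ⟨le_rfl, ht⟩⟩ ?_
    rintro b ⟨s, ⟨hs0, hst⟩, rfl⟩
    have h1 := hVpos s hs0
    have h2 := hVmono hs0 ht hst
    show -V t ≤ w₀ + X s
    linarith
  exact max_le hVt (by linarith)
end

section
/- For the linear motorway network with resource-route incidence matrix A upper triangular with ones on and above the diagonal (A_{ji}=1 iff j ≤ i), the workload cone W = A[ρ]A' ℝ_+^J equals {w ∈ ℝ^J : (w_{j-1}−w_j)/ρ_{j-1} ≤ (w_j−w_{j+1})/ρ_j for j = 1,…,J}, where w_{J+1} = 0 and the left-hand side is interpreted as 0 when j = 1. -/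
open Matrix

/-- Extension of a vector `w : Fin J → ℝ` to `ℕ`, with default value `d` out of range. -/
noncomputable def extVec {J : ℕ} (w : Fin J → ℝ) (d : ℝ) : ℕ → ℝ :=
  fun k => if h : k < J then w ⟨k, h⟩ else d

lemma mulVec_key {J : ℕ} (ρ q : Fin J → ℝ) (j : Fin J) :
    ((Matrix.of fun j i : Fin J => if j ≤ i then (1 : ℝ) else 0) *
      Matrix.diagonal ρ *
      (Matrix.of fun j i : Fin J => if j ≤ i then (1 : ℝ) else 0)ᵀ).mulVec q j
    = ∑ i : Fin J, if j ≤ i then ρ i * ∑ k : Fin J, (if k ≤ i then q k else 0) else 0 := by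
  rw [← Matrix.mulVec_mulVec, ← Matrix.mulVec_mulVec]
  simp [Matrix.mulVec, dotProduct, Matrix.transpose_apply, ite_mul, mul_ite,
    Matrix.diagonal_apply, Finset.sum_ite_eq, mul_comm]

/-- Telescoping step: `W j - W̃ (j+1) = v j` where `W j = ∑_{i ≥ j} v i`. -/
lemma step_lemma {J : ℕ} (v : Fin J → ℝ) (j : Fin J) :
    (∑ i : Fin J, if j ≤ i then v i else 0)
      - extVec (fun l => ∑ i : Fin J, if l ≤ i then v i else 0) 0 (j.val + 1) = v j := by
  by_cases h : j.val + 1 < J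
  · have h1 : extVec (fun l => ∑ i : Fin J, if l ≤ i then v i else 0) 0 (j.val + 1)
        = ∑ i : Fin J, if (⟨j.val + 1, h⟩ : Fin J) ≤ i then v i else 0 := by
      simp [extVec, h]
    rw [h1, ← Finset.sum_sub_distrib]
    have h2 : ∀ i : Fin J,
        ((if j ≤ i then v i else 0) - (if (⟨j.val + 1, h⟩ : Fin J) ≤ i then v i else 0))
        = if i = j then v i else 0 := by
      intro i
      have e1 : (j ≤ i) = (j.val ≤ i.val) := by rw [Fin.le_def]
      have e2 : ((⟨j.val + 1, h⟩ : Fin J) ≤ i) = (j.val + 1 ≤ i.val) := by rw [Fin.le_def]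
      have e3 : (i = j) = (i.val = j.val) := by rw [Fin.ext_iff]
      simp only [e1, e2, e3]
      split_ifs <;> first | (exfalso; omega) | (rw [sub_zero]) | (rw [sub_self])
    rw [Finset.sum_congr rfl fun i _ => h2 i, Finset.sum_ite_eq' Finset.univ j v]
    simp
  · have h1 : extVec (fun l => ∑ i : Fin J, if l ≤ i then v i else 0) 0 (j.val + 1) = 0 := by
      simp [extVec, h]
    have h2 : ∀ i : Fin J, (if j ≤ i then v i else 0) = if i = j then v i else 0 := by
      intro i
      have hi := i.isLt
      have e1 : (j ≤ i) = (j.val ≤ i.val) := by rw [Fin.le_def]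
      have e3 : (i = j) = (i.val = j.val) := by rw [Fin.ext_iff]
      simp only [e1, e3]
      split_ifs with a b
      · rfl
      · exfalso; omega
      · exfalso; omega
      · rfl
    rw [h1, Finset.sum_congr rfl fun i _ => h2 i, Finset.sum_ite_eq' Finset.univ j v]
    simp

/-- For the linear motorway network, with `A` the `J × J` matrix with `A j i = 1` iff
`j ≤ i`, the workload cone `A[ρ]Aᵀ ℝ₊^J` equals the set of `w` with
`(w_{j-1} - w_j)/ρ_{j-1} ≤ (w_j - w_{j+1})/ρ_j` for `j = 1,…,J`, where `w_{J+1} = 0`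
and the left-hand side is read as `0` for `j = 1`. -/
theorem linear_network_workload_cone {J : ℕ} (hJ : 1 ≤ J)
    (ρ : Fin J → ℝ) (hρ : ∀ j, 0 < ρ j) :
    {w : Fin J → ℝ | ∃ q : Fin J → ℝ, (∀ j, 0 ≤ q j) ∧
        w = ((Matrix.of fun j i : Fin J => if j ≤ i then (1 : ℝ) else 0) *
          diagonal ρ *
          (Matrix.of fun j i : Fin J => if j ≤ i then (1 : ℝ) else 0)ᵀ).mulVec q} =
    {w : Fin J → ℝ | ∀ k : ℕ, k < J →
        (if k = 0 then 0 else
          (extVec w 0 (k - 1) - extVec w 0 k) / extVec ρ 1 (k - 1)) ≤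
        (extVec w 0 k - extVec w 0 (k + 1)) / extVec ρ 1 k} := by
  ext w
  simp only [Set.mem_setOf_eq]
  constructor
  · rintro ⟨q, hq, rfl⟩
    set Q : Fin J → ℝ := fun i => ∑ k : Fin J, (if k ≤ i then q k else 0) with hQ
    set v : Fin J → ℝ := fun i => ρ i * Q i with hv
    have hwfun : (((Matrix.of fun j i : Fin J => if j ≤ i then (1 : ℝ) else 0) *
          diagonal ρ *
          (Matrix.of fun j i : Fin J => if j ≤ i then (1 : ℝ) else 0)ᵀ).mulVec q)
        = fun l => ∑ i : Fin J, if l ≤ i then v i else 0 :=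
      funext fun l => mulVec_key ρ q l
    rw [hwfun]
    set F : Fin J → ℝ := fun l => ∑ i : Fin J, if l ≤ i then v i else 0 with hF
    have hstep : ∀ l : Fin J, extVec F 0 l.val - extVec F 0 (l.val + 1) = v l := by
      intro l
      have h0 : extVec F 0 l.val = F l := by simp [extVec, l.isLt]
      rw [h0]
      exact step_lemma v l
    have hρE : ∀ m : ℕ, (hm : m < J) → extVec ρ 1 m = ρ ⟨m, hm⟩ := by
      intro m hm; simp [extVec, hm]
    have hQnonneg : ∀ i : Fin J, 0 ≤ Q i := by
      intro i
      refine Finset.sum_nonneg fun k _ => ?_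
      split_ifs
      · exact hq k
      · exact le_refl 0
    have hQmono : ∀ i i' : Fin J, i ≤ i' → Q i ≤ Q i' := by
      intro i i' hii
      refine Finset.sum_le_sum fun k _ => ?_
      split_ifs with a b
      · exact le_refl _
      · exact absurd (le_trans a hii) b
      · exact hq k
      · exact le_refl 0
    intro k hk
    have hrhs : (extVec F 0 k - extVec F 0 (k + 1)) / extVec ρ 1 k = Q ⟨k, hk⟩ := by
      rw [hstep ⟨k, hk⟩, hρE k hk, hv]
      exact mul_div_cancel_left₀ _ (hρ ⟨k, hk⟩).ne'
    rw [hrhs]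
    by_cases hk0 : k = 0
    · simp only [hk0, if_pos rfl]
      exact hQnonneg _
    · rw [if_neg hk0]
      have hk1 : k - 1 < J := by omega
      have hlhs : (extVec F 0 (k - 1) - extVec F 0 k) / extVec ρ 1 (k - 1) = Q ⟨k - 1, hk1⟩ := by
        have e : k - 1 + 1 = k := by omega
        have := hstep ⟨k - 1, hk1⟩
        simp only [e] at this
        rw [this, hρE (k - 1) hk1, hv]
        exact mul_div_cancel_left₀ _ (hρ ⟨k - 1, hk1⟩).ne'
      rw [hlhs]
      exact hQmono _ _ (by simp only [Fin.mk_le_mk]; omega)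
  · intro hw
    set E : ℕ → ℝ := extVec w 0 with hE
    set dd : ℕ → ℝ := fun n => (E n - E (n + 1)) / extVec ρ 1 n with hdd
    set g : ℕ → ℝ := fun n => if n = 0 then 0 else dd (n - 1) with hg
    have hg_succ : ∀ n, g (n + 1) = dd n := by
      intro n; simp [hg]
    have hle : ∀ n, n < J → g n ≤ dd n := by
      intro n hn
      have := hw n hn
      by_cases h0 : n = 0
      · simpa [hg, h0] using this
      · have e : n - 1 + 1 = n := by omega
        simp only [hg, if_neg h0, hdd, e]
        simpa [if_neg h0] using this
    refine ⟨fun k => dd k.val - g k.val, fun k => sub_nonneg.2 (hle k.val k.isLt), ?_⟩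
    funext l
    rw [mulVec_key]
    -- Step A : inner sum equals dd i.val
    have hQ : ∀ i : Fin J, (∑ k : Fin J, (if k ≤ i then (dd k.val - g k.val) else 0)) = dd i.val := by
      intro i
      have e1 : (∑ k : Fin J, (if k ≤ i then (dd k.val - g k.val) else 0))
          = ∑ n ∈ Finset.range J, (if n ≤ i.val then (dd n - g n) else 0) := by
        rw [← Fin.sum_univ_eq_sum_range (fun n => if n ≤ i.val then (dd n - g n) else 0) J]
        refine Finset.sum_congr rfl fun k _ => ?_
        have : (k ≤ i) = (k.val ≤ i.val) := by rw [Fin.le_def]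
        simp only [this]
      rw [e1]
      have e2 : ∑ n ∈ Finset.range J, (if n ≤ i.val then (dd n - g n) else 0)
          = ∑ n ∈ Finset.range (i.val + 1), (dd n - g n) := by
        rw [← Finset.sum_subset (Finset.range_subset_range.2 i.isLt)]
        · refine Finset.sum_congr rfl fun n hn => ?_
          rw [if_pos (by simpa using Nat.lt_succ_iff.1 (Finset.mem_range.1 hn))]
        · intro x _ hx
          rw [if_neg (by simp only [Finset.mem_range] at hx; omega)]
      rw [e2]
      have e3 : ∀ n, dd n - g n = g (n + 1) - g n := by
        intro n; rw [hg_succ]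
      rw [Finset.sum_congr rfl fun n _ => e3 n, Finset.sum_range_sub g, hg_succ]
      simp [hg]
    -- Step B : outer telescoping
    have hterm : ∀ i : Fin J, ρ i * dd i.val = E i.val - E (i.val + 1) := by
      intro i
      have : extVec ρ 1 i.val = ρ i := by simp [extVec, i.isLt]
      rw [hdd]
      simp only [this]
      exact mul_div_cancel₀ _ (hρ i).ne'
    calc w l = ∑ n ∈ Finset.range J,
          ((fun m => E (max m l.val)) n - (fun m => E (max m l.val)) (n + 1)) := by
          rw [Finset.sum_range_sub' (fun m => E (max m l.val)) J]
          have e4 : max 0 l.val = l.val := by omega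
          have e5 : max J l.val = J := by have := l.isLt; omega
          rw [e4, e5]
          have : E J = 0 := by simp [hE, extVec]
          rw [this, sub_zero]
          simp [hE, extVec, l.isLt]
      _ = ∑ n ∈ Finset.range J, (if l.val ≤ n then (E n - E (n + 1)) else 0) := by
          refine Finset.sum_congr rfl fun n _ => ?_
          by_cases h : l.val ≤ n
          · have e4 : max n l.val = n := by omega
            have e5 : max (n + 1) l.val = n + 1 := by omega
            rw [if_pos h]; simp only [e4, e5]
          · have e4 : max n l.val = l.val := by omega
            have e5 : max (n + 1) l.val = l.val := by omega
            rw [if_neg h]; simp only [e4, e5, sub_self]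
      _ = ∑ i : Fin J, (if l ≤ i then (E i.val - E (i.val + 1)) else 0) := by
          rw [← Fin.sum_univ_eq_sum_range (fun n => if l.val ≤ n then (E n - E (n + 1)) else 0) J]
          refine Finset.sum_congr rfl fun i _ => ?_
          have : (l ≤ i) = (l.val ≤ i.val) := by rw [Fin.le_def]
          simp only [this]
      _ = ∑ i : Fin J, (if l ≤ i then ρ i * ∑ k : Fin J,
            (if k ≤ i then (dd k.val - g k.val) else 0) else 0) := by
          refine Finset.sum_congr rfl fun i _ => ?_
          rw [hQ i, hterm i]
end

section
/- Priority-to-upstream strategy optimality for the linear network: suppose cumulative flows Λ satisfy, for j = J down to 1, that ∫₀^t Λ_j(M(s))ds is maximal subject to M_j(t) = M_j(0)+E_j(t)−∫₀^t Λ_j(M(s))ds ≥ 0 and Σ_{i=j}^J Λ_i(M(t)) ≤ C_j with equality whenever M_j(t) > 0. Then for every j and t, the cumulative flow along link j, ∫₀^t Σ_{i=j}^J Λ_i(M(s)) ds, is maximal among all admissible policies; in particular the strategy minimizes Σ_j M_j(t) for all t. -/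
open Finset Set

/-- A policy is described by its cumulative outputs `S t i` from line `i` up to time `t`; the size
of line `i` at time `t` is `M0 i + E t i - S t i`. -/
def AdmissibleLN {J : ℕ} (C : Fin J → ℝ) (M0 : Fin J → ℝ)
    (E : ℝ → Fin J → ℝ) (S : ℝ → Fin J → ℝ) : Prop :=
  (∀ i, S 0 i = 0) ∧
  (∀ i, MonotoneOn (fun t => S t i) (Ici 0)) ∧
  (∀ i t, 0 ≤ t → S t i ≤ M0 i + E t i) ∧
  (∀ j : Fin J, ∀ s t : ℝ, 0 ≤ s → s ≤ t →
    ∑ i ∈ univ.filter (fun i => j ≤ i), (S t i - S s i) ≤ C j * (t - s))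

/-!
Fix a link `j` and compare the flows through it, `g` under an admissible `S` and `f` under the
greedy `Sstar`. By downward induction on `j`, the lines `i > j` have sent at least as much under
`Sstar` as under `S`; so while `g` leads `f`, line `j` itself has sent more under `S` than under
`Sstar`, line `j` is nonempty under `Sstar`, and `Sstar` runs link `j` at full capacity `C j`,
which `S` cannot beat. Starting from the last time `t₀ ≤ t` at which `g ≤ f`, this gives
`g t ≤ f t`.
-/

open Filter Topology

theorem le_of_sub_le_mul_of_sub_eq_mul {f g : ℝ → ℝ} {c t : ℝ} (ht : 0 ≤ t)
    (hf : MonotoneOn f (Ici 0)) (hg : ∀ s u, 0 ≤ s → s ≤ u → g u - g s ≤ c * (u - s))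
    (h0 : g 0 ≤ f 0)
    (hfull : ∀ u, 0 ≤ u → u ≤ t → (∀ v, u ≤ v → v ≤ t → f v < g v) →
      f t - f u = c * (t - u)) :
    g t ≤ f t := by
  set A := {s ∈ Icc 0 t | g s ≤ f s}
  have hA : A.Nonempty := ⟨0, ⟨le_rfl, ht⟩, h0⟩
  have hlub : IsLUB A (sSup A) := isLUB_csSup hA ⟨t, fun s hs => hs.1.2⟩
  set t₀ := sSup A
  have ht₀ : 0 ≤ t₀ := hlub.1 ⟨⟨le_rfl, ht⟩, h0⟩
  -- `g - f` can only jump downwards, so the supremum `t₀` of the catch-up times is one.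
  have hgf₀ : g t₀ ≤ f t₀ := by
    refine ge_of_tendsto_of_frequently (f := fun s => f t₀ + c * (t₀ - s)) (x := 𝓝[≤] t₀)
      (tendsto_nhdsWithin_of_tendsto_nhds (Continuous.tendsto' (by fun_prop) _ _ (by simp)))
      ((hlub.frequently_mem hA).mono fun s hs => ?_)
    have := hg s t₀ hs.1.1 (hlub.1 hs)
    have := hf hs.1.1 ht₀ (hlub.1 hs)
    linarith [hs.2]
  rcases (hlub.2 fun s hs => hs.1.2 : t₀ ≤ t).eq_or_lt with ht₀t | ht₀t
  · rwa [← ht₀t]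
  refine ge_of_tendsto (f := fun u => f t + c * (u - t₀)) (x := 𝓝[>] t₀)
    (tendsto_nhdsWithin_of_tendsto_nhds (Continuous.tendsto' (by fun_prop) _ _ (by simp))) ?_
  -- On `(t₀, t]` the flow `g` leads, so `f` runs at the full rate `c` there.
  filter_upwards [Ioc_mem_nhdsGT ht₀t] with u ⟨hu₀, hut⟩
  have hgap : ∀ v, u ≤ v → v ≤ t → f v < g v := fun v huv hvt =>
    lt_of_not_ge fun hv => (hu₀.trans_le huv).not_ge (hlub.1 ⟨⟨by linarith, hvt⟩, hv⟩)
  have := hfull u (by linarith) hut hgap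
  have := hg t₀ t ht₀ ht₀t.le
  have := hf ht₀ (show (0:ℝ) ≤ u by linarith) hu₀.le
  linarith

section LinearNetwork

variable {J : ℕ} {C M0 : Fin J → ℝ} {E S Sstar : ℝ → Fin J → ℝ}

theorem AdmissibleLN.sum_Ici_sub_le (hS : AdmissibleLN C M0 E S) (j : Fin J) {s t : ℝ}
    (hs : 0 ≤ s) (hst : s ≤ t) :
    ∑ i ∈ Ici j, S t i - ∑ i ∈ Ici j, S s i ≤ C j * (t - s) := by
  simpa only [filter_le_eq_Ici, sum_sub_distrib] using hS.2.2.2 j s t hs hst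

theorem AdmissibleLN.monotoneOn_sum_Ici (hS : AdmissibleLN C M0 E S) (j : Fin J) :
    MonotoneOn (fun t => ∑ i ∈ Ici j, S t i) (Ici 0) :=
  fun _ hs _ hu hsu => sum_le_sum fun i _ => hS.2.1 i hs hu hsu

theorem AdmissibleLN.sum_Ici_le_of_sum_Ioi_le {j : Fin J} (hS : AdmissibleLN C M0 E S)
    (hstar : AdmissibleLN C M0 E Sstar)
    (hgreedy : ∀ s t : ℝ, 0 ≤ s → s ≤ t →
      (∀ u, s ≤ u → u ≤ t → 0 < M0 j + E u j - Sstar u j) →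
      ∑ i ∈ Ici j, Sstar t i - ∑ i ∈ Ici j, Sstar s i = C j * (t - s))
    (htail : ∀ v, 0 ≤ v → ∑ i ∈ Ioi j, S v i ≤ ∑ i ∈ Ioi j, Sstar v i) {t : ℝ} (ht : 0 ≤ t) :
    ∑ i ∈ Ici j, S t i ≤ ∑ i ∈ Ici j, Sstar t i := by
  refine le_of_sub_le_mul_of_sub_eq_mul ht (hstar.monotoneOn_sum_Ici j)
    (fun _ _ => hS.sum_Ici_sub_le j) (by simp [hS.1, hstar.1])
    fun u hu hut hlt => hgreedy u t hu hut fun v huv hvt => ?_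
  have hv : 0 ≤ v := hu.trans huv
  have := hlt v huv hvt
  rw [← add_sum_Ioi_eq_sum_Ici, ← add_sum_Ioi_eq_sum_Ici] at this
  linarith [htail v hv, hS.2.2.1 j v hv]

theorem AdmissibleLN.sum_Ici_le_of_greedy (hS : AdmissibleLN C M0 E S)
    (hstar : AdmissibleLN C M0 E Sstar)
    (hgreedy : ∀ j : Fin J, ∀ s t : ℝ, 0 ≤ s → s ≤ t →
      (∀ u, s ≤ u → u ≤ t → 0 < M0 j + E u j - Sstar u j) →
      ∑ i ∈ Ici j, Sstar t i - ∑ i ∈ Ici j, Sstar s i = C j * (t - s))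
    (j : Fin J) {t : ℝ} (ht : 0 ≤ t) :
    ∑ i ∈ Ici j, S t i ≤ ∑ i ∈ Ici j, Sstar t i := by
  induction j using WellFoundedGT.induction generalizing t with
  | _ j ih =>
  refine hS.sum_Ici_le_of_sum_Ioi_le hstar (hgreedy j) (fun v hv => ?_) ht
  by_cases hj : IsMax j
  · simp [Finset.Ioi_eq_empty.mpr hj]
  · rw [← Finset.Ici_succ_eq_Ioi_of_not_isMax hj]
    exact ih _ (Order.lt_succ_of_not_isMax hj) hv

end LinearNetwork

theorem priority_to_upstream_optimal_general {J : ℕ}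
    (C : Fin J → ℝ)
    (M0 : Fin J → ℝ)
    (E : ℝ → Fin J → ℝ)
    (Sstar : ℝ → Fin J → ℝ) (hstar : AdmissibleLN C M0 E Sstar)
    (hgreedy : ∀ j : Fin J, ∀ s t : ℝ, 0 ≤ s → s ≤ t →
      (∀ u, s ≤ u → u ≤ t → 0 < M0 j + E u j - Sstar u j) →
      ∑ i ∈ univ.filter (fun i => j ≤ i), (Sstar t i - Sstar s i) = C j * (t - s)) :
    ∀ S : ℝ → Fin J → ℝ, AdmissibleLN C M0 E S →
      (∀ j : Fin J, ∀ t : ℝ, 0 ≤ t →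
        ∑ i ∈ univ.filter (fun i => j ≤ i), S t i ≤
          ∑ i ∈ univ.filter (fun i => j ≤ i), Sstar t i) ∧
      (∀ t : ℝ, 0 ≤ t →
        ∑ i, (M0 i + E t i - Sstar t i) ≤ ∑ i, (M0 i + E t i - S t i)) := by
  intro S hS
  simp only [filter_le_eq_Ici, sum_sub_distrib] at hgreedy ⊢
  have hlink (j : Fin J) (t : ℝ) (ht : 0 ≤ t) := hS.sum_Ici_le_of_greedy hstar hgreedy j ht
  refine ⟨hlink, fun t ht => ?_⟩
  have htotal : ∑ i, S t i ≤ ∑ i, Sstar t i := by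
    obtain _ | J := J
    · simp
    · simpa using hlink ⊥ t ht
  linarith

/-- Optimality of the priority-to-upstream strategy for the linear network: if the
admissible policy `Sstar` serves section `j` at full capacity `C j` whenever line `j`
is nonempty (for `j = J` down to `1`), then for every section `j` and time `t` the
cumulative flow through section `j` under `Sstar` is maximal among all admissible
policies; in particular `Sstar` minimizes the total line size `Σ_j M_j(t)` for all `t`. -/
theorem priority_to_upstream_optimal {J : ℕ}
    (C : Fin J → ℝ) (hCpos : ∀ j, 0 < C j) (hCanti : StrictAnti C)
    (M0 : Fin J → ℝ) (hM0 : ∀ i, 0 ≤ M0 i)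
    (E : ℝ → Fin J → ℝ) (hE0 : ∀ i, E 0 i = 0)
    (hEmono : ∀ i, MonotoneOn (fun t => E t i) (Ici 0))
    (Sstar : ℝ → Fin J → ℝ) (hstar : AdmissibleLN C M0 E Sstar)
    (hgreedy : ∀ j : Fin J, ∀ s t : ℝ, 0 ≤ s → s ≤ t →
      (∀ u, s ≤ u → u ≤ t → 0 < M0 j + E u j - Sstar u j) →
      ∑ i ∈ univ.filter (fun i => j ≤ i), (Sstar t i - Sstar s i) = C j * (t - s)) :
    ∀ S : ℝ → Fin J → ℝ, AdmissibleLN C M0 E S →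
      (∀ j : Fin J, ∀ t : ℝ, 0 ≤ t →
        ∑ i ∈ univ.filter (fun i => j ≤ i), S t i ≤
          ∑ i ∈ univ.filter (fun i => j ≤ i), Sstar t i) ∧
      (∀ t : ℝ, 0 ≤ t →
        ∑ i, (M0 i + E t i - Sstar t i) ≤ ∑ i, (M0 i + E t i - S t i)) :=
  priority_to_upstream_optimal_general C M0 E Sstar hstar hgreedy
end
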